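/- Let $x_1,\dots,x_B \in [0,1]$ be (possibly random) values chosen by an algorithm where $x_t$ may depend on $Z_1,\dots,Z_{t-1}$, and let $Z_1,\dots,Z_B$ be i.i.d. uniform on $\{-1,1\}$, with $Z_t$ independent of $x_1,\dots,x_t$. If $\mathbb{E}[\sum_{t=1}^B x_t^2] \ge \epsilon B$ for some $\epsilon \in (0, 1/4]$, then $\mathbb{E}[|\sum_{t=1}^B x_t Z_t|] \ge \frac{\epsilon\sqrt{B}}{4\sqrt{\log(1/\epsilon)}}$. -/

import Mathlib

/-!
Let `W = ∑_{s<t} x_s Z_s`. Since `Z_t ^ 2 = 1` and `Z_t` is centred and independent of every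
function of `Z_s, s < t`, expanding gives `E (W + x_t Z_t)² = E W² + E x_t²`. Applying the same
expansion to `(W + x_t Z_t)² = (W² + x_t²) + (2 W x_t) Z_t` and using `x_t² ≤ 1` gives
`E (W + x_t Z_t)⁴ ≤ E W⁴ + 6 E W² + E x_t²`. Hence the full sum `X` has
`E X² = M := E ∑ x_t² ≥ εB` and `E X⁴ ≤ 7 B M`. Integrating the pointwise inequality
`3 s² X² ≤ X⁴ + 2 s³ |X|` with `s = 3 √B` yields `E|X| ≥ (10/27) ε √B`, which beats the claimed
bound because `log (1/ε) ≥ log 4 ≥ 1`.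
-/

open MeasureTheory ProbabilityTheory
open scoped ENNReal

section LInfty

variable {Ω : Type*} {mΩ : MeasurableSpace Ω} {μ : Measure Ω}

lemma MeasureTheory.MemLp.mul_top {f g : Ω → ℝ} (hf : MemLp f ∞ μ) (hg : MemLp g ∞ μ) :
    MemLp (fun ω => f ω * g ω) ∞ μ :=
  hg.mul' hf

lemma MeasureTheory.MemLp.pow_top {f : Ω → ℝ} (hf : MemLp f ∞ μ) (n : ℕ) :
    MemLp (fun ω => f ω ^ n) ∞ μ := by
  induction n with
  | zero => simpa using memLp_top_const (1 : ℝ)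
  | succ n ih => simpa only [pow_succ] using ih.mul_top hf

end LInfty

section Rademacher

variable {Ω : Type*} [MeasurableSpace Ω] {μ : Measure Ω} [IsProbabilityMeasure μ] {Z : Ω → ℝ}

lemma ae_eq_one_or_eq_neg_one_of_measure_eq_half (hZ : Measurable Z)
    (h1 : μ {ω | Z ω = 1} = 1 / 2) (h2 : μ {ω | Z ω = -1} = 1 / 2) :
    ∀ᵐ ω ∂μ, Z ω = 1 ∨ Z ω = -1 := by
  have hdisj : Disjoint {ω | Z ω = 1} {ω | Z ω = -1} :=
    Set.disjoint_left.2 fun ω h₁ h₂ => by norm_num [show Z ω = 1 from h₁] at h₂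
  have hunion : μ ({ω | Z ω = 1} ∪ {ω | Z ω = -1}) = 1 := by
    rw [measure_union hdisj (hZ (measurableSet_singleton _)), h1, h2, ENNReal.add_halves]
  exact (prob_compl_eq_zero_iff
    ((hZ (measurableSet_singleton _)).union (hZ (measurableSet_singleton _)))).2 hunion

lemma integral_eq_zero_of_measure_eq_half (hZ : Measurable Z)
    (h1 : μ {ω | Z ω = 1} = 1 / 2) (h2 : μ {ω | Z ω = -1} = 1 / 2) :
    ∫ ω, Z ω ∂μ = 0 := by
  have hA : MeasurableSet {ω | Z ω = 1} := hZ (measurableSet_singleton 1)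
  have hA' : MeasurableSet {ω | Z ω = -1} := hZ (measurableSet_singleton (-1))
  have hZ_eq : Z =ᵐ[μ] fun ω => {ω | Z ω = 1}.indicator 1 ω - {ω | Z ω = -1}.indicator 1 ω := by
    filter_upwards [ae_eq_one_or_eq_neg_one_of_measure_eq_half hZ h1 h2] with ω hω
    rcases hω with h | h <;> norm_num [Set.indicator_apply, h]
  rw [integral_congr_ae hZ_eq, integral_sub ((integrable_const 1).indicator hA)
    ((integrable_const 1).indicator hA'), integral_indicator_one hA, integral_indicator_one hA',
    measureReal_def, measureReal_def, h1, h2, sub_self]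

end Rademacher

section PastSigma

variable {Ω ι : Type*} [Preorder ι] {x Z : ι → Ω → ℝ}

abbrev pastSigma (Z : ι → Ω → ℝ) (t : ι) : MeasurableSpace Ω :=
  ⨆ s, ⨆ _ : s < t, MeasurableSpace.comap (Z s) inferInstance

lemma pastSigma_mono {s t : ι} (hst : s ≤ t) : pastSigma Z s ≤ pastSigma Z t :=
  iSup₂_le fun u hu => le_iSup₂_of_le (f := fun u (_ : u < t) => _) u (hu.trans_le hst) le_rfl

lemma measurable_pastSigma {s t : ι} (hst : s < t) : Measurable[pastSigma Z t] (Z s) :=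
  Measurable.of_comap_le (le_iSup₂_of_le (f := fun u (_ : u < t) => _) s hst le_rfl)

lemma measurable_pastSigma_sum_mul {s : Finset ι} {t : ι} (hs : ∀ i ∈ s, i < t)
    (hxm : ∀ i, Measurable[pastSigma Z i] (x i)) :
    Measurable[pastSigma Z t] fun ω => ∑ i ∈ s, x i ω * Z i ω :=
  Finset.measurable_sum s fun i hi =>
    ((hxm i).mono (pastSigma_mono (hs i hi).le) le_rfl).mul (measurable_pastSigma (hs i hi))

variable [MeasurableSpace Ω]

lemma pastSigma_le (hZ : ∀ s, Measurable (Z s)) (t : ι) : pastSigma Z t ≤ ‹MeasurableSpace Ω› :=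
  iSup₂_le fun s _ => (hZ s).comap_le

lemma indep_pastSigma {μ : Measure Ω} (hZ : ∀ s, Measurable (Z s)) (hind : iIndepFun Z μ)
    (t : ι) : Indep (pastSigma Z t) (MeasurableSpace.comap (Z t) inferInstance) μ := by
  have h := indep_iSup_of_disjoint (fun i => (hZ i).comap_le) hind
    (S := {s | s < t}) (T := {t}) (Set.disjoint_singleton_right.2 (lt_irrefl t))
  rwa [iSup_singleton] at h

lemma integral_mul_eq_zero_of_measurable_pastSigma {μ : Measure Ω} (hZ : ∀ s, Measurable (Z s))
    (hind : iIndepFun Z μ) {t : ι} (hZ0 : ∫ ω, Z t ω ∂μ = 0) {g : Ω → ℝ}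
    (hg : Measurable[pastSigma Z t] g) : ∫ ω, g ω * Z t ω ∂μ = 0 := by
  have hgZ : IndepFun g (Z t) μ :=
    indep_of_indep_of_le_left (indep_pastSigma hZ hind t) hg.comap_le
  rw [hgZ.integral_fun_mul_eq_mul_integral
    (hg.mono (pastSigma_le hZ t) le_rfl).aestronglyMeasurable (hZ t).aestronglyMeasurable,
    hZ0, mul_zero]

end PastSigma

section Moments

variable {Ω ι : Type*} [MeasurableSpace Ω] {μ : Measure Ω} [IsFiniteMeasure μ]

lemma integral_add_mul_sq {P Q Z : Ω → ℝ} (hP : MemLp P ∞ μ) (hQ : MemLp Q ∞ μ)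
    (hZ : MemLp Z ∞ μ) (hZsq : ∀ᵐ ω ∂μ, Z ω ^ 2 = 1) (horth : ∫ ω, P ω * Q ω * Z ω ∂μ = 0) :
    ∫ ω, (P ω + Q ω * Z ω) ^ 2 ∂μ = ∫ ω, P ω ^ 2 ∂μ + ∫ ω, Q ω ^ 2 ∂μ := by
  have h_expand : (fun ω => (P ω + Q ω * Z ω) ^ 2)
      =ᵐ[μ] fun ω => P ω ^ 2 + 2 * (P ω * Q ω * Z ω) + Q ω ^ 2 := by
    filter_upwards [hZsq] with ω hω
    linear_combination Q ω ^ 2 * hω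
  have hP2 := (hP.pow_top 2).integrable le_top
  have hQ2 := (hQ.pow_top 2).integrable le_top
  have hPQZ := ((hP.mul_top hQ).mul_top hZ).integrable le_top
  rw [integral_congr_ae h_expand, integral_add (hP2.fun_add (hPQZ.const_mul 2)) hQ2,
    integral_add hP2 (hPQZ.const_mul 2), integral_const_mul, horth, mul_zero, add_zero]

lemma integral_add_mul_pow_four_le {W c Z : Ω → ℝ} (hW : MemLp W ∞ μ) (hc : MemLp c ∞ μ)
    (hc1 : ∀ ω, |c ω| ≤ 1) (hZ : MemLp Z ∞ μ) (hZsq : ∀ᵐ ω ∂μ, Z ω ^ 2 = 1)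
    (horth : ∫ ω, (W ω ^ 2 + c ω ^ 2) * (2 * W ω * c ω) * Z ω ∂μ = 0) :
    ∫ ω, (W ω + c ω * Z ω) ^ 4 ∂μ
      ≤ ∫ ω, W ω ^ 4 ∂μ + 6 * ∫ ω, W ω ^ 2 ∂μ + ∫ ω, c ω ^ 2 ∂μ := by
  have hW2 := (hW.pow_top 2).integrable le_top
  have hW4 := (hW.pow_top 4).integrable le_top
  have hc2 := (hc.pow_top 2).integrable le_top
  have hP : MemLp (fun ω => W ω ^ 2 + c ω ^ 2) ∞ μ := (hW.pow_top 2).add (hc.pow_top 2)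
  have hQ : MemLp (fun ω => 2 * W ω * c ω) ∞ μ := (hW.const_mul 2).mul_top hc
  have h_sq : (fun ω => (W ω + c ω * Z ω) ^ 4) =ᵐ[μ]
      fun ω => (W ω ^ 2 + c ω ^ 2 + 2 * W ω * c ω * Z ω) ^ 2 := by
    filter_upwards [hZsq] with ω hω
    linear_combination
      (4 * W ω * c ω ^ 3 * Z ω + 2 * W ω ^ 2 * c ω ^ 2 + c ω ^ 4 * (Z ω ^ 2 + 1)) * hω
  have h_pt : ∀ ω, (W ω ^ 2 + c ω ^ 2) ^ 2 + (2 * W ω * c ω) ^ 2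
      ≤ W ω ^ 4 + 6 * W ω ^ 2 + c ω ^ 2 := fun ω => by
    have : c ω ^ 2 ≤ 1 := (sq_le_one_iff_abs_le_one _).2 (hc1 ω)
    nlinarith [sq_nonneg (W ω), sq_nonneg (c ω)]
  calc ∫ ω, (W ω + c ω * Z ω) ^ 4 ∂μ
      = ∫ ω, (W ω ^ 2 + c ω ^ 2) ^ 2 ∂μ + ∫ ω, (2 * W ω * c ω) ^ 2 ∂μ := by
        rw [integral_congr_ae h_sq, integral_add_mul_sq hP hQ hZ hZsq horth]
    _ = ∫ ω, ((W ω ^ 2 + c ω ^ 2) ^ 2 + (2 * W ω * c ω) ^ 2) ∂μ :=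
        (integral_add ((hP.pow_top 2).integrable le_top)
          ((hQ.pow_top 2).integrable le_top)).symm
    _ ≤ ∫ ω, (W ω ^ 4 + 6 * W ω ^ 2 + c ω ^ 2) ∂μ :=
        integral_mono (((hP.pow_top 2).add (hQ.pow_top 2)).integrable le_top)
          ((hW4.fun_add (hW2.const_mul 6)).fun_add hc2) h_pt
    _ = ∫ ω, W ω ^ 4 ∂μ + 6 * ∫ ω, W ω ^ 2 ∂μ + ∫ ω, c ω ^ 2 ∂μ := by
        rw [integral_add (hW4.fun_add (hW2.const_mul 6)) hc2,
          integral_add hW4 (hW2.const_mul 6), integral_const_mul]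

variable [LinearOrder ι] {x Z : ι → Ω → ℝ}

lemma integral_sum_mul_sq (hx : ∀ i, MemLp (x i) ∞ μ)
    (hxm : ∀ i, Measurable[pastSigma Z i] (x i))
    (hZ : ∀ i, MemLp (Z i) ∞ μ) (hZsq : ∀ i, ∀ᵐ ω ∂μ, Z i ω ^ 2 = 1)
    (horth : ∀ i g, Measurable[pastSigma Z i] g → ∫ ω, g ω * Z i ω ∂μ = 0) (s : Finset ι) :
    ∫ ω, (∑ i ∈ s, x i ω * Z i ω) ^ 2 ∂μ = ∫ ω, ∑ i ∈ s, x i ω ^ 2 ∂μ := by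
  induction s using Finset.induction_on_max with
  | empty => simp
  | insert t s hs ih =>
    have ht : t ∉ s := fun h => lt_irrefl t (hs t h)
    have hW : MemLp (fun ω => ∑ i ∈ s, x i ω * Z i ω) ∞ μ :=
      memLp_finsetSum s fun i _ => (hx i).mul_top (hZ i)
    simp only [Finset.sum_insert ht, add_comm (x t _ * Z t _), add_comm (x t _ ^ 2)]
    rw [integral_add_mul_sq hW (hx t) (hZ t) (hZsq t)
      (horth t _ ((measurable_pastSigma_sum_mul hs hxm).mul (hxm t))), ih,
      integral_add (integrable_finsetSum s fun i _ => ((hx i).pow_top 2).integrable le_top)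
        (((hx t).pow_top 2).integrable le_top)]

lemma integral_sum_mul_pow_four_le (hx : ∀ i, MemLp (x i) ∞ μ) (hx1 : ∀ i ω, |x i ω| ≤ 1)
    (hxm : ∀ i, Measurable[pastSigma Z i] (x i))
    (hZ : ∀ i, MemLp (Z i) ∞ μ) (hZsq : ∀ i, ∀ᵐ ω ∂μ, Z i ω ^ 2 = 1)
    (horth : ∀ i g, Measurable[pastSigma Z i] g → ∫ ω, g ω * Z i ω ∂μ = 0) (s : Finset ι) :
    ∫ ω, (∑ i ∈ s, x i ω * Z i ω) ^ 4 ∂μ ≤ 7 * s.card * ∫ ω, ∑ i ∈ s, x i ω ^ 2 ∂μ := by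
  induction s using Finset.induction_on_max with
  | empty => simp
  | insert t s hs ih =>
    have ht : t ∉ s := fun h => lt_irrefl t (hs t h)
    have hWm := measurable_pastSigma_sum_mul hs hxm
    have h_step := integral_add_mul_pow_four_le
      (memLp_finsetSum s fun i _ => (hx i).mul_top (hZ i)) (hx t) (hx1 t) (hZ t) (hZsq t)
      (horth t _ (((hWm.pow_const 2).add ((hxm t).pow_const 2)).mul
        ((hWm.const_mul 2).mul (hxm t))))
    rw [integral_sum_mul_sq hx hxm hZ hZsq horth] at h_step
    have hS0 : 0 ≤ ∫ ω, ∑ i ∈ s, x i ω ^ 2 ∂μ :=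
      integral_nonneg fun ω => Finset.sum_nonneg fun i _ => sq_nonneg _
    have hx20 : 0 ≤ ∫ ω, x t ω ^ 2 ∂μ := integral_nonneg fun ω => sq_nonneg _
    simp only [Finset.sum_insert ht, Finset.card_insert_of_notMem ht, add_comm (x t _ * Z t _),
      add_comm (x t _ ^ 2)]
    rw [integral_add (integrable_finsetSum s fun i _ => ((hx i).pow_top 2).integrable le_top)
      (((hx t).pow_top 2).integrable le_top)]
    push_cast
    nlinarith [ih]

end Moments

section AbsoluteMoment

variable {Ω : Type*} [MeasurableSpace Ω] {μ : Measure Ω} [IsFiniteMeasure μ]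

/-- Optimizing over `s` gives `E|X| ≥ (E X²)^{3/2} / (E X⁴)^{1/2}`. -/
lemma three_mul_sq_mul_sq_le {s : ℝ} (hs : 0 ≤ s) (x : ℝ) :
    3 * s ^ 2 * x ^ 2 ≤ x ^ 4 + 2 * s ^ 3 * |x| := by
  have h := mul_nonneg (abs_nonneg x)
    (mul_nonneg (sq_nonneg (|x| - s)) (by positivity : 0 ≤ |x| + 2 * s))
  calc 3 * s ^ 2 * x ^ 2 = 3 * s ^ 2 * |x| ^ 2 := by rw [sq_abs]
    _ ≤ (|x| ^ 2) ^ 2 + 2 * s ^ 3 * |x| := by nlinarith [h]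
    _ = x ^ 4 + 2 * s ^ 3 * |x| := by rw [sq_abs]; ring

lemma three_mul_sq_mul_integral_sq_sub_integral_pow_four_le {X : Ω → ℝ} (hX : MemLp X ∞ μ)
    {s : ℝ} (hs : 0 ≤ s) :
    3 * s ^ 2 * ∫ ω, X ω ^ 2 ∂μ - ∫ ω, X ω ^ 4 ∂μ ≤ 2 * s ^ 3 * ∫ ω, |X ω| ∂μ := by
  have hX4 := (hX.pow_top 4).integrable le_top
  have hX1 := (hX.integrable le_top).abs.const_mul (2 * s ^ 3)
  have h := integral_mono (((hX.pow_top 2).integrable le_top).const_mul (3 * s ^ 2))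
    (hX4.fun_add hX1) fun ω => three_mul_sq_mul_sq_le hs (X ω)
  rw [integral_const_mul, integral_add hX4 hX1, integral_const_mul] at h
  linarith

lemma mul_sqrt_le_four_mul_integral_abs {X : Ω → ℝ} (hX : MemLp X ∞ μ) {n ε : ℝ}
    (hn : 0 ≤ n) (hε : 0 ≤ ε) (h2 : ε * n ≤ ∫ ω, X ω ^ 2 ∂μ)
    (h4 : ∫ ω, X ω ^ 4 ∂μ ≤ 7 * n * ∫ ω, X ω ^ 2 ∂μ) :
    ε * Real.sqrt n ≤ 4 * ∫ ω, |X ω| ∂μ := by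
  have hlow := three_mul_sq_mul_integral_sq_sub_integral_pow_four_le hX
    (by positivity : 0 ≤ 3 * Real.sqrt n)
  have ha : 0 ≤ ∫ ω, |X ω| ∂μ := integral_nonneg fun ω => abs_nonneg _
  rcases (Real.sqrt_nonneg n).eq_or_lt with h | h
  · rw [← h]; linarith
  rw [← Real.sq_sqrt hn] at h2 h4
  -- with `r = √n`, the hypotheses combine to `20 ε r⁴ ≤ 54 r³ E|X|`
  refine le_of_mul_le_mul_left ?_ (pow_pos h 3)
  nlinarith [mul_le_mul_of_nonneg_left h2 (sq_nonneg (Real.sqrt n)),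
    mul_nonneg hε (pow_nonneg h.le 4)]

end AbsoluteMoment

lemma one_le_sqrt_log_one_div {ε : ℝ} (hε0 : 0 < ε) (hε : ε ≤ 1 / 4) :
    1 ≤ Real.sqrt (Real.log (1 / ε)) := by
  rw [Real.one_le_sqrt, Real.le_log_iff_exp_le (by positivity)]
  have : 4 ≤ 1 / ε := by rw [le_div_iff₀ hε0]; linarith
  linarith [Real.exp_one_lt_d9]

theorem stmt0_general
    {Ω : Type*} [MeasurableSpace Ω] (μ : Measure Ω) [IsProbabilityMeasure μ]
    (B : ℕ) (x Z : Fin B → Ω → ℝ)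
    (hx01 : ∀ t ω, x t ω ∈ Set.Icc (0:ℝ) 1)
    (hxmeas : ∀ t : Fin B, Measurable[⨆ s : Fin B, ⨆ _ : s < t,
      MeasurableSpace.comap (Z s) inferInstance] (x t))
    (hZmeas : ∀ t, Measurable (Z t))
    (hZindep : iIndepFun Z μ)
    (hZ1 : ∀ t, μ {ω | Z t ω = 1} = 1/2)
    (hZneg : ∀ t, μ {ω | Z t ω = -1} = 1/2)
    (ε : ℝ) (hε : ε ∈ Set.Ioc (0:ℝ) (1/4))
    (hmoment : ε * B ≤ ∫ ω, ∑ t, (x t ω)^2 ∂μ) :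
    ε * Real.sqrt B / (4 * Real.sqrt (Real.log (1/ε)))
      ≤ ∫ ω, |∑ t, x t ω * Z t ω| ∂μ := by
  obtain ⟨hε0, hε4⟩ := hε
  have hZsq : ∀ t, ∀ᵐ ω ∂μ, Z t ω ^ 2 = 1 := fun t =>
    (ae_eq_one_or_eq_neg_one_of_measure_eq_half (hZmeas t) (hZ1 t) (hZneg t)).mono
      fun ω h => by rcases h with h | h <;> simp [h]
  have hZ : ∀ t, MemLp (Z t) ∞ μ := fun t =>
    memLp_top_of_bound (hZmeas t).aestronglyMeasurable 1 ((hZsq t).mono fun ω h => by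
      simpa [← sq_le_one_iff_abs_le_one] using h.le)
  have hx1 : ∀ t ω, |x t ω| ≤ 1 := fun t ω =>
    abs_le.2 ⟨by linarith [(hx01 t ω).1], (hx01 t ω).2⟩
  have hx : ∀ t, MemLp (x t) ∞ μ := fun t =>
    memLp_top_of_bound ((hxmeas t).mono (pastSigma_le hZmeas t) le_rfl).aestronglyMeasurable 1
      (.of_forall fun ω => by simpa using hx1 t ω)
  have horth : ∀ t g, Measurable[pastSigma Z t] g → ∫ ω, g ω * Z t ω ∂μ = 0 := fun t _ hg =>
    integral_mul_eq_zero_of_measurable_pastSigma hZmeas hZindep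
      (integral_eq_zero_of_measure_eq_half (hZmeas t) (hZ1 t) (hZneg t)) hg
  have h2 := integral_sum_mul_sq hx hxmeas hZ hZsq horth Finset.univ
  have h4 := integral_sum_mul_pow_four_le hx hx1 hxmeas hZ hZsq horth Finset.univ
  rw [Finset.card_univ, Fintype.card_fin, ← h2] at h4
  have hkey := mul_sqrt_le_four_mul_integral_abs
    (memLp_finsetSum Finset.univ fun t _ => (hx t).mul_top (hZ t)) B.cast_nonneg hε0.le
    (h2 ▸ hmoment) h4
  calc ε * Real.sqrt B / (4 * Real.sqrt (Real.log (1 / ε))) ≤ ε * Real.sqrt B / 4 :=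
        div_le_div_of_nonneg_left (by positivity) (by norm_num)
          (by linarith [one_le_sqrt_log_one_div hε0 hε4])
    _ ≤ ∫ ω, |∑ t, x t ω * Z t ω| ∂μ := by linarith

/-- Martingale anti-concentration: if `Z t` are i.i.d. uniform on `{-1,1}`,
`x t ∈ [0,1]` is measurable with respect to the σ-algebra generated by `Z s` for `s < t`
(so `Z t` is independent of `x 1, …, x t`), and `E[∑ x t ^ 2] ≥ ε B` for `ε ∈ (0, 1/4]`,
then `E|∑ x t * Z t| ≥ ε √B / (4 √(log (1/ε)))`. -/
theorem stmt0
    {Ω : Type*} [MeasurableSpace Ω] (μ : Measure Ω) [IsProbabilityMeasure μ]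
    (B : ℕ) (hB : 1 ≤ B) (x Z : Fin B → Ω → ℝ)
    (hx01 : ∀ t ω, x t ω ∈ Set.Icc (0:ℝ) 1)
    (hxmeas : ∀ t : Fin B, Measurable[⨆ s : Fin B, ⨆ _ : s < t,
      MeasurableSpace.comap (Z s) inferInstance] (x t))
    (hZmeas : ∀ t, Measurable (Z t))
    (hZindep : iIndepFun Z μ)
    (hZ1 : ∀ t, μ {ω | Z t ω = 1} = 1/2)
    (hZneg : ∀ t, μ {ω | Z t ω = -1} = 1/2)
    (ε : ℝ) (hε : ε ∈ Set.Ioc (0:ℝ) (1/4))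
    (hmoment : ε * B ≤ ∫ ω, ∑ t, (x t ω)^2 ∂μ) :
    ε * Real.sqrt B / (4 * Real.sqrt (Real.log (1/ε)))
      ≤ ∫ ω, |∑ t, x t ω * Z t ω| ∂μ :=
  stmt0_general μ B x Z hx01 hxmeas hZmeas hZindep hZ1 hZneg ε hε hmoment
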